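/- With notation as in the monodromy relation for the rank-two module (E(u)=u+p, c_0=p, λ = λ_+λ_-, λ_{++} = (c_0/E)λ_+, B = [[h u λ_+ λ_-', 0],[0, h u λ_- λ_+']], C_0 = [[0,-1],[E^h,0]]): for ζ ∈ F[[u]], the matrix C = [[ζ, -1],[E^h, 0]] satisfies N_∇(C) + B C = p(E/c_0) C φ(B) if and only if ζ is a solution of the differential equation h u (E/c_0)(λ_- λ_{++}' - λ_{++} λ_-') ζ + u λ ζ' = 0, if and only if ζ = a (λ_- /λ_{++})^h for some constant a ∈ F. -/

import Mathlib

/-!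
The series `λ`, `λ₊`, `λ₋` are the unique solutions with constant term `1` of their functional
equations, because `φ = expand p` multiplies the `u`-adic order by `p`, so `g = A · φ(g)` with
`g(0) = 0` forces `g = 0`. Comparing solutions gives `λ₋ = φ(λ₊)` and `λ = λ₊ λ₋`, and the equation
of `λ₊` gives `λ₊₊ = φ²(λ₊) = φ(λ₋)`. With the chain rule `u (φ f)' = p u^p φ(f')` the entries
`(0,1)` and `(1,0)` of the monodromy relation hold identically, and the entry `(0,0)` is the
differential equation. After division by `u E / p` that equation says exactly that
`ζ (λ₊₊ / λ₋)^h` has derivative zero.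
-/

open PowerSeries Filter

noncomputable section

/-- `Hge m vp v f` says the Gauss valuation `v_R(f) = min_i (i + m * vp (a_i))` is `≥ v`. -/
def Hge {F : Type*} [Field F] (m : ℝ) (vp : F → ℝ) (v : ℝ) (f : PowerSeries F) : Prop :=
  ∀ i : ℕ, (PowerSeries.coeff i) f ≠ 0 → v ≤ (i : ℝ) + m * vp ((PowerSeries.coeff i) f)

/-- `vReq m vp f v` says `v_R(f) = v`: it is a lower bound and it is attained. -/
def vReq {F : Type*} [Field F] (m : ℝ) (vp : F → ℝ) (f : PowerSeries F) (v : ℝ) : Prop :=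
  Hge m vp v f ∧ ∃ i : ℕ, (PowerSeries.coeff i) f ≠ 0 ∧
    (i : ℝ) + m * vp ((PowerSeries.coeff i) f) = v

/-- membership in `R = O_{F,[0,p^{-1/m}]}`: `i + m * vp (a_i) → ∞`. -/
def MemR {F : Type*} [Field F] (m : ℝ) (vp : F → ℝ) (f : PowerSeries F) : Prop :=
  ∀ N : ℝ, ∀ᶠ i : ℕ in Filter.atTop,
    (PowerSeries.coeff i) f = 0 ∨ N ≤ (i : ℝ) + m * vp ((PowerSeries.coeff i) f)

/-- The Frobenius `φ` on power series: substitution `u ↦ u^p`. -/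
def phiF {F : Type*} [Field F] (p : ℕ) (f : PowerSeries F) : PowerSeries F :=
  PowerSeries.mk fun n => if p ∣ n then (PowerSeries.coeff (n / p)) f else 0

/-- Formal derivative `d/du` of a power series. -/
def dWrt {F : Type*} [Field F] (f : PowerSeries F) : PowerSeries F :=
  PowerSeries.mk fun n => ((n : F) + 1) * (PowerSeries.coeff (n + 1)) f

theorem phiF_eq_expand {F : Type*} [Field F] {p : ℕ} (hp : p ≠ 0) :
    phiF p = ⇑(expand p hp : F⟦X⟧ →ₐ[F] F⟦X⟧) := by
  ext f n
  simp [phiF, coeff_expand]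

theorem dWrt_eq_derivative {F : Type*} [Field F] : dWrt = ⇑(d⁄dX F) := by
  ext f n
  simp [dWrt, coeff_derivative, mul_comm]

theorem monodromy_matrix_eq_iff {R : Type*} [CommRing R] (N φ : R → R) (hN0 : N 0 = 0)
    (hN1 : N (-1) = 0) (hφ0 : φ 0 = 0) (ζ e b₁ b₂ s : R) :
    !![ζ, -1; e, 0].map N + !![b₁, 0; 0, b₂] * !![ζ, -1; e, 0] =
        s • (!![ζ, -1; e, 0] * !![b₁, 0; 0, b₂].map φ) ↔
      N ζ + b₁ * ζ = s * (ζ * φ b₁) ∧ b₁ = s * φ b₂ ∧ N e + b₂ * e = s * (e * φ b₁) := by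
  simp [← Matrix.ext_iff, Fin.forall_fin_two, Matrix.vecMul, dotProduct, Fin.sum_univ_two, hN0,
    hN1, hφ0, and_assoc]

namespace PowerSeries

variable {R : Type*} [CommRing R]

theorem eq_zero_of_eq_mul_expand {q : ℕ} (hq0 : q ≠ 0) (hq1 : q ≠ 1) {g A : R⟦X⟧}
    (hg0 : constantCoeff g = 0) (hg : g = A * expand q hq0 g) : g = 0 := by
  by_contra hne
  obtain ⟨n, hn⟩ := ENat.ne_top_iff_exists.mp (order_eq_top.not.mpr hne)
  have hn0 : n ≠ 0 := by
    rintro rfl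
    exact order_ne_zero_iff_constCoeff_eq_zero.mpr hg0 hn.symm
  have hle : q • g.order ≤ g.order :=
    calc q • g.order = (expand q hq0 g).order := (order_expand q hq0 g).symm
      _ ≤ A.order + (expand q hq0 g).order := le_add_self
      _ ≤ (A * expand q hq0 g).order := le_order_mul _ _
      _ = g.order := by rw [← hg]
  rw [← hn, nsmul_eq_mul] at hle
  norm_cast at hle
  have : 2 * n ≤ q * n := Nat.mul_le_mul_right n (by omega)
  omega

theorem eq_expand_of_eq_mul_expand_expand {p : ℕ} (hp0 : p ≠ 0) (hp1 : p ≠ 1)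
    {E lamP lamM : R⟦X⟧} {c : R} (hlamP0 : constantCoeff lamP = 1)
    (hlamP : lamP = E * C c * expand p hp0 (expand p hp0 lamP))
    (hlamM0 : constantCoeff lamM = 1)
    (hlamM : lamM = expand p hp0 E * C c * expand p hp0 (expand p hp0 lamM)) :
    lamM = expand p hp0 lamP := by
  have hexp := congrArg (expand p hp0) hlamP
  rw [map_mul, map_mul, expand_C] at hexp
  refine sub_eq_zero.mp (eq_zero_of_eq_mul_expand (mul_ne_zero hp0 hp0)
    (fun h => hp1 (Nat.eq_one_of_mul_eq_one_right h)) (A := expand p hp0 E * C c) ?_ ?_)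
  · simp [hlamP0, hlamM0]
  · rw [expand_mul p hp0 p hp0, map_sub, map_sub]
    linear_combination hlamM - hexp

theorem eq_mul_expand_of_eq_mul_expand {p : ℕ} (hp0 : p ≠ 0) (hp1 : p ≠ 1)
    {E lam lamP : R⟦X⟧} {c : R} (hlam0 : constantCoeff lam = 1)
    (hlam : lam = E * C c * expand p hp0 lam) (hlamP0 : constantCoeff lamP = 1)
    (hlamP : lamP = E * C c * expand p hp0 (expand p hp0 lamP)) :
    lam = lamP * expand p hp0 lamP := by
  refine sub_eq_zero.mp (eq_zero_of_eq_mul_expand hp0 hp1 (A := E * C c) ?_ ?_)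
  · simp [hlam0, hlamP0]
  · rw [map_sub, map_mul]
    linear_combination hlam - expand p hp0 lamP * hlamP

theorem X_mul_derivative_expand {p : ℕ} (hp : p ≠ 0) (f : R⟦X⟧) :
    X * d⁄dX R (expand p hp f) = (p : R⟦X⟧) * X ^ p * expand p hp (d⁄dX R f) := by
  rw [expand_apply, expand_apply, derivative_subst (HasSubst.X_pow hp), derivative_pow,
    derivative_X, mul_one, ← pow_sub_one_mul hp X]
  ring

theorem C_mul_natCast {p : ℕ} {c : R} (hc : (p : R) * c = 1) : C c * (p : R⟦X⟧) = 1 := by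
  rw [← map_natCast C p, ← map_mul, mul_comm, hc, map_one]

section Monodromy

variable {p : ℕ} (hp : p ≠ 0) (h : ℕ) {E lam lamP lamM lamPP : R⟦X⟧}

theorem natCast_mul_expand_diag (hM : lamM = expand p hp lamP)
    (hPP : lamPP = expand p hp lamM) :
    (p : R⟦X⟧) * expand p hp ((h : R⟦X⟧) * X * lamP * d⁄dX R lamM) =
      (h : R⟦X⟧) * lamM * (X * d⁄dX R lamPP) := by
  subst hM hPP
  simp only [map_mul, map_natCast, expand_X]
  linear_combination
    -(h : R⟦X⟧) * expand p hp lamP * X_mul_derivative_expand hp (expand p hp lamP)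

theorem diag_eq_mul_expand_diag (hM : lamM = expand p hp lamP)
    (hPP : lamPP = expand p hp lamM) (hEPP : E * lamPP = p * lamP) :
    (h : R⟦X⟧) * X * lamP * d⁄dX R lamM =
      E * expand p hp ((h : R⟦X⟧) * X * lamM * d⁄dX R lamP) := by
  subst hM hPP
  simp only [map_mul, map_natCast, expand_X]
  linear_combination (h : R⟦X⟧) * lamP * X_mul_derivative_expand hp lamP
    - h * X ^ p * expand p hp (d⁄dX R lamP) * hEPP

theorem mul_expand_diag_sub_diag (hM : lamM = expand p hp lamP)
    (hPP : lamPP = expand p hp lamM) (hEPP : E * lamPP = p * lamP) {c : R}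
    (hc : (p : R) * c = 1) :
    E * expand p hp ((h : R⟦X⟧) * X * lamP * d⁄dX R lamM) -
        (h : R⟦X⟧) * X * lamP * d⁄dX R lamM =
      (h : R⟦X⟧) * X * (E * C c) * (lamM * d⁄dX R lamPP - lamPP * d⁄dX R lamM) := by
  linear_combination (E * C c) * natCast_mul_expand_diag hp h hM hPP
    - E * expand p hp ((h : R⟦X⟧) * X * lamP * d⁄dX R lamM) * C_mul_natCast hc
    + (h : R⟦X⟧) * X * d⁄dX R lamM * lamP * C_mul_natCast hc
    + (h : R⟦X⟧) * X * d⁄dX R lamM * C c * hEPP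

theorem monodromy_lower_left (hM : lamM = expand p hp lamP) (hPP : lamPP = expand p hp lamM)
    (hEPP : E * lamPP = p * lamP) {c : R} (hc : (p : R) * c = 1) (hlam : lam = lamP * lamM)
    (hdE : d⁄dX R E = 1) :
    -(X * lam * d⁄dX R (E ^ h)) + (h : R⟦X⟧) * X * lamM * d⁄dX R lamP * E ^ h =
      E * (E ^ h * expand p hp ((h : R⟦X⟧) * X * lamP * d⁄dX R lamM)) := by
  have hdEPP : E * d⁄dX R lamPP + lamPP = p * d⁄dX R lamP := by
    simpa [hdE] using congrArg (d⁄dX R) hEPP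
  rcases h with _ | k
  · simp
  rw [derivative_pow, hdE, Nat.add_sub_cancel]
  set b := expand p hp (((k + 1 : ℕ) : R⟦X⟧) * X * lamP * d⁄dX R lamM)
  set n : R⟦X⟧ := ((k + 1 : ℕ) : R⟦X⟧)
  linear_combination (E ^ (k + 2) * b - E ^ (k + 1) * n * lamM * X * d⁄dX R lamP
      + E ^ k * n * lamM * X * lamP) * C_mul_natCast hc
    - E ^ (k + 2) * C c * natCast_mul_expand_diag hp (k + 1) hM hPP
    - E ^ (k + 1) * C c * n * lamM * X * hdEPP
    + E ^ k * C c * n * lamM * X * hEPP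
    - n * E ^ k * X * hlam

end Monodromy

theorem derivative_eq_zero_iff [IsAddTorsionFree R] {f : R⟦X⟧} :
    d⁄dX R f = 0 ↔ ∃ a : R, f = C a := by
  refine ⟨fun hf => ⟨constantCoeff f, derivative.ext (by simpa using hf) (by simp)⟩, ?_⟩
  rintro ⟨a, rfl⟩
  exact derivative_C

section Field

variable {F : Type*} [Field F] [CharZero F]

theorem wronskian_mul_add_mul_derivative_eq_zero_iff {u v : F⟦X⟧} (hu : constantCoeff u ≠ 0)
    (hv : constantCoeff v ≠ 0) (n : ℕ) (ζ : F⟦X⟧) :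
    n * (u * d⁄dX F v - v * d⁄dX F u) * ζ + v * u * d⁄dX F ζ = 0 ↔
      ∃ a : F, ζ = C a * (u * v⁻¹) ^ n := by
  set r := v * u⁻¹ with hr_def
  have hu1 : u * u⁻¹ = 1 := PowerSeries.mul_inv_cancel u hu
  have hr : r ≠ 0 := by
    intro h0
    simpa [r, hu, hv] using congrArg constantCoeff h0
  have hdr : u ^ 2 * d⁄dX F r = u * d⁄dX F v - v * d⁄dX F u := by
    simp only [r, Derivation.leibniz, derivative_inv', smul_eq_mul]
    linear_combination (u * d⁄dX F v - v * d⁄dX F u * (u * u⁻¹ + 1)) * hu1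
  have hpow : (n : F⟦X⟧) * r ^ (n - 1) * r = n * r ^ n := by
    cases n <;> simp [pow_succ, mul_assoc]
  have key : u ^ 2 * r * d⁄dX F (ζ * r ^ n) =
      r ^ n * (n * (u * d⁄dX F v - v * d⁄dX F u) * ζ + v * u * d⁄dX F ζ) := by
    rw [Derivation.leibniz, derivative_pow, smul_eq_mul, smul_eq_mul]
    linear_combination ζ * (u ^ 2 * d⁄dX F r) * hpow + n * r ^ n * ζ * hdr
      + r ^ n * d⁄dX F ζ * u ^ 2 * hr_def + r ^ n * d⁄dX F ζ * u * v * hu1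
  have hinv : (u * v⁻¹) ^ n * r ^ n = 1 := by
    rw [← mul_pow, hr_def, mul_mul_mul_comm, mul_comm v⁻¹, ← mul_mul_mul_comm, hu1,
      PowerSeries.mul_inv_cancel v hv, mul_one, one_pow]
  have hu0 : u ^ 2 * r ≠ 0 := mul_ne_zero (pow_ne_zero _ fun h0 => hu (by simp [h0])) hr
  calc _ ↔ d⁄dX F (ζ * r ^ n) = 0 := by
        rw [← mul_right_inj' (pow_ne_zero n hr), ← key, mul_zero, mul_eq_zero, or_iff_right hu0]
    _ ↔ ∃ a : F, ζ * r ^ n = C a := derivative_eq_zero_iff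
    _ ↔ _ := exists_congr fun a =>
        ⟨fun h => by linear_combination (u * v⁻¹) ^ n * h - ζ * hinv,
          fun h => by linear_combination r ^ n * h + C a * hinv⟩

theorem monodromy_ode_iff {p : ℕ} {c : F} (hc : (p : F) * c = 1) {E lam lamP lamM lamPP : F⟦X⟧}
    (hE : E ≠ 0) (hM0 : constantCoeff lamM ≠ 0) (hPP0 : constantCoeff lamPP ≠ 0)
    (hlam : lam = lamP * lamM) (hEPP : E * lamPP = p * lamP) (h : ℕ) (ζ : F⟦X⟧) :
    (h : F⟦X⟧) * X * (E * C c) * (lamM * d⁄dX F lamPP - lamPP * d⁄dX F lamM) * ζ +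
        X * lam * d⁄dX F ζ = 0 ↔
      ∃ a : F, ζ = C a * (lamM * lamPP⁻¹) ^ h := by
  have hfactor : (h : F⟦X⟧) * X * (E * C c) * (lamM * d⁄dX F lamPP - lamPP * d⁄dX F lamM) * ζ +
        X * lam * d⁄dX F ζ = X * E * C c * ((h : F⟦X⟧) *
          (lamM * d⁄dX F lamPP - lamPP * d⁄dX F lamM) * ζ + lamPP * lamM * d⁄dX F ζ) := by
    linear_combination X * d⁄dX F ζ * hlam - X * d⁄dX F ζ * lamM * lamP * C_mul_natCast hc
      - X * d⁄dX F ζ * lamM * C c * hEPP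
  have hc0 : C c ≠ 0 := (map_ne_zero C).mpr (right_ne_zero_of_mul_eq_one hc)
  rw [hfactor, mul_eq_zero, or_iff_right (mul_ne_zero (mul_ne_zero X_ne_zero hE) hc0)]
  exact wronskian_mul_add_mul_derivative_eq_zero_iff hM0 hPP0 h ζ

end Field

end PowerSeries

theorem stmt_6_general {F : Type*} [Field F] [CharZero F] (p : ℕ) (hp : p.Prime)
    (h : ℕ)
    (E lam lamP lamM lamPP : PowerSeries F)
    (hE : E = PowerSeries.X + PowerSeries.C (p : F))
    (hlam0 : PowerSeries.constantCoeff lam = 1)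
    (hlam : lam = E * PowerSeries.C (p : F)⁻¹ * phiF p lam)
    (hlamP0 : PowerSeries.constantCoeff lamP = 1)
    (hlamP : lamP = E * PowerSeries.C (p : F)⁻¹ * phiF p (phiF p lamP))
    (hlamM0 : PowerSeries.constantCoeff lamM = 1)
    (hlamM : lamM = phiF p E * PowerSeries.C (p : F)⁻¹ * phiF p (phiF p lamM))
    (hlamPP : lamPP = PowerSeries.C (p : F) * E⁻¹ * lamP)
    (ζ : PowerSeries F) :
    ((!![ζ, -1; E ^ h, 0] : Matrix (Fin 2) (Fin 2) (PowerSeries F)).map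
          (fun f => -(PowerSeries.X * lam * dWrt f)) +
        (!![(h : PowerSeries F) * PowerSeries.X * lamP * dWrt lamM, 0;
            0, (h : PowerSeries F) * PowerSeries.X * lamM * dWrt lamP] :
          Matrix (Fin 2) (Fin 2) (PowerSeries F)) * !![ζ, -1; E ^ h, 0] =
      ((p : PowerSeries F) * E * PowerSeries.C (p : F)⁻¹) •
        ((!![ζ, -1; E ^ h, 0] : Matrix (Fin 2) (Fin 2) (PowerSeries F)) *
          (!![(h : PowerSeries F) * PowerSeries.X * lamP * dWrt lamM, 0;
              0, (h : PowerSeries F) * PowerSeries.X * lamM * dWrt lamP]).map (phiF p))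
      ↔ (h : PowerSeries F) * PowerSeries.X * (E * PowerSeries.C (p : F)⁻¹) *
          (lamM * dWrt lamPP - lamPP * dWrt lamM) * ζ +
          PowerSeries.X * lam * dWrt ζ = 0) ∧
    ((h : PowerSeries F) * PowerSeries.X * (E * PowerSeries.C (p : F)⁻¹) *
          (lamM * dWrt lamPP - lamPP * dWrt lamM) * ζ +
          PowerSeries.X * lam * dWrt ζ = 0
      ↔ ∃ a : F, ζ = PowerSeries.C a * (lamM * lamPP⁻¹) ^ h) := by
  have hp0 := hp.ne_zero
  have hc : (p : F) * (p : F)⁻¹ = 1 := mul_inv_cancel₀ (Nat.cast_ne_zero.mpr hp0)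
  rw [phiF_eq_expand hp0] at hlam hlamP hlamM ⊢
  rw [dWrt_eq_derivative]
  have hM := eq_expand_of_eq_mul_expand_expand hp0 hp.ne_one hlamP0 hlamP hlamM0 hlamM
  have hlamPM : lam = lamP * lamM :=
    hM ▸ eq_mul_expand_of_eq_mul_expand hp0 hp.ne_one hlam0 hlam hlamP0 hlamP
  have hEinv : E * E⁻¹ = 1 := PowerSeries.mul_inv_cancel E (by simpa [hE] using hp0)
  have hE0 : E ≠ 0 := by rintro rfl; simp at hEinv
  have hEPP : E * lamPP = p * lamP := by
    rw [hlamPP, ← map_natCast C]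
    linear_combination C (p : F) * lamP * hEinv
  have hPP : lamPP = expand p hp0 lamM := mul_left_cancel₀ hE0 <| by
    rw [hM]
    linear_combination hEPP + p * hlamP + E * expand p hp0 (expand p hp0 lamP) * C_mul_natCast hc
  have hdiag := mul_expand_diag_sub_diag hp0 h hM hPP hEPP hc
  rw [monodromy_matrix_eq_iff _ _ (by simp) (by simp) (map_zero _),
    show (p : F⟦X⟧) * E * C (p : F)⁻¹ = E by linear_combination E * C_mul_natCast hc]
  refine ⟨⟨fun hmat => ?_, fun hode => ⟨?_, diag_eq_mul_expand_diag hp0 h hM hPP hEPP,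
    monodromy_lower_left hp0 h hM hPP hEPP hc hlamPM (by simp [hE])⟩⟩,
    monodromy_ode_iff hc hE0 (by simp [hlamM0]) (by simp [hPP, hlamM0]) hlamPM hEPP h ζ⟩
  · linear_combination -hmat.1 - ζ * hdiag
  · linear_combination -hode - ζ * hdiag

/-- for `ζ ∈ F[[u]]`, `C = [[ζ,-1],[E^h,0]]` satisfies the monodromy
relation `N_∇(C) + B C = p(E/c₀) C φ(B)` iff `ζ` solves
`h u (E/c₀)(λ_- λ_{++}' - λ_{++} λ_-') ζ + u λ ζ' = 0` iff `ζ = a (λ_- / λ_{++})^h`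
for some `a ∈ F`. -/
theorem stmt_6 {F : Type*} [Field F] [CharZero F] (p : ℕ) (hp : p.Prime)
    (h : ℕ) (hh : 1 ≤ h)
    (E lam lamP lamM lamPP : PowerSeries F)
    (hE : E = PowerSeries.X + PowerSeries.C (p : F))
    (hlam0 : PowerSeries.constantCoeff lam = 1)
    (hlam : lam = E * PowerSeries.C (p : F)⁻¹ * phiF p lam)
    (hlamP0 : PowerSeries.constantCoeff lamP = 1)
    (hlamP : lamP = E * PowerSeries.C (p : F)⁻¹ * phiF p (phiF p lamP))
    (hlamM0 : PowerSeries.constantCoeff lamM = 1)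
    (hlamM : lamM = phiF p E * PowerSeries.C (p : F)⁻¹ * phiF p (phiF p lamM))
    (hlamPP : lamPP = PowerSeries.C (p : F) * E⁻¹ * lamP)
    (ζ : PowerSeries F) :
    ((!![ζ, -1; E ^ h, 0] : Matrix (Fin 2) (Fin 2) (PowerSeries F)).map
          (fun f => -(PowerSeries.X * lam * dWrt f)) +
        (!![(h : PowerSeries F) * PowerSeries.X * lamP * dWrt lamM, 0;
            0, (h : PowerSeries F) * PowerSeries.X * lamM * dWrt lamP] :
          Matrix (Fin 2) (Fin 2) (PowerSeries F)) * !![ζ, -1; E ^ h, 0] =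
      ((p : PowerSeries F) * E * PowerSeries.C (p : F)⁻¹) •
        ((!![ζ, -1; E ^ h, 0] : Matrix (Fin 2) (Fin 2) (PowerSeries F)) *
          (!![(h : PowerSeries F) * PowerSeries.X * lamP * dWrt lamM, 0;
              0, (h : PowerSeries F) * PowerSeries.X * lamM * dWrt lamP]).map (phiF p))
      ↔ (h : PowerSeries F) * PowerSeries.X * (E * PowerSeries.C (p : F)⁻¹) *
          (lamM * dWrt lamPP - lamPP * dWrt lamM) * ζ +
          PowerSeries.X * lam * dWrt ζ = 0) ∧
    ((h : PowerSeries F) * PowerSeries.X * (E * PowerSeries.C (p : F)⁻¹) *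
          (lamM * dWrt lamPP - lamPP * dWrt lamM) * ζ +
          PowerSeries.X * lam * dWrt ζ = 0
      ↔ ∃ a : F, ζ = PowerSeries.C a * (lamM * lamPP⁻¹) ^ h) :=
  stmt_6_general p hp h E lam lamP lamM lamPP hE hlam0 hlam hlamP0 hlamP hlamM0 hlamM hlamPP ζ
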